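/- arXiv:1507.01968 — 8 statements merged into one kernel-verified Lean document; each statement's English description precedes it below -/
import Mathlib

section
/- Let G be a finite group and let H and K be subgroups of G that are almost conjugate in G. If H is a normal subgroup of G, then H = K. -/
/-! A normal subgroup `H` is a union of conjugacy classes, so `H` meets the class of `g` in
either the whole class (when `g ∈ H`) or nowhere. Almost conjugacy of `H` and `K` then forces
`K` to meet exactly the classes inside `H`, and to contain each of them completely. -/

section

variable {G : Type*} [Group G]

theorem Subgroup.Normal.mem_of_isConj {H : Subgroup G} (hN : H.Normal) {x g : G}
    (hxg : IsConj x g) (hx : x ∈ H) : g ∈ H := by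
  obtain ⟨c, rfl⟩ := isConj_iff.mp hxg
  exact hN.conj_mem x hx c

theorem Subgroup.Normal.setOf_mem_and_isConj_eq {H : Subgroup G} (hN : H.Normal) {g : G}
    (hg : g ∈ H) : {x : G | x ∈ H ∧ IsConj x g} = {x : G | IsConj x g} :=
  Set.ext fun _ => ⟨And.right, fun hxg => ⟨hN.mem_of_isConj hxg.symm hg, hxg⟩⟩

theorem Subgroup.ncard_setOf_mem_and_isConj_pos [Finite G] {K : Subgroup G} {g : G}
    (hg : g ∈ K) : 0 < Set.ncard {x : G | x ∈ K ∧ IsConj x g} :=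
  (Set.ncard_pos).mpr ⟨g, hg, IsConj.refl g⟩

theorem Subgroup.mem_of_ncard_setOf_isConj_le [Finite G] {K : Subgroup G} {g : G}
    (h : Set.ncard {x : G | IsConj x g} ≤ Set.ncard {x : G | x ∈ K ∧ IsConj x g}) : g ∈ K := by
  have hclass : {x : G | x ∈ K ∧ IsConj x g} = {x : G | IsConj x g} :=
    Set.eq_of_subset_of_ncard_le (fun _ => And.right) h
  have hg : g ∈ {x : G | x ∈ K ∧ IsConj x g} := hclass ▸ IsConj.refl g
  exact hg.1

end

/-- If `H` and `K` are almost conjugate subgroups of a finite group `G`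
(for every `g ∈ G` the number of elements of `H` conjugate to `g` equals the
number of elements of `K` conjugate to `g`) and `H` is normal in `G`, then `H = K`. -/
theorem eq_of_almostConj_of_normal {G : Type*} [Group G] [Finite G]
    (H K : Subgroup G)
    (hAC : ∀ g : G, Set.ncard {x : G | x ∈ H ∧ IsConj x g} =
      Set.ncard {x : G | x ∈ K ∧ IsConj x g})
    (hN : H.Normal) : H = K := by
  refine le_antisymm (fun g hg => ?_) (fun g hg => ?_)
  · apply Subgroup.mem_of_ncard_setOf_isConj_le
    rw [← hAC g, hN.setOf_mem_and_isConj_eq hg]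
  · have hpos := hAC g ▸ Subgroup.ncard_setOf_mem_and_isConj_pos hg
    obtain ⟨x, hxH, hxg⟩ := Set.nonempty_of_ncard_ne_zero hpos.ne'
    exact hN.mem_of_isConj hxg hxH
end

section
/- Let S be a finite group with subgroups L and L' that are almost conjugate in S, and let K be any finite group. Then the subgroups L × K and L' × K of the direct product S × K are almost conjugate in S × K. -/
theorem Prod.isConj_iff {S K : Type*} [Group S] [Group K] {x g : S × K} :
    IsConj x g ↔ IsConj x.1 g.1 ∧ IsConj x.2 g.2 := by
  simp only [_root_.isConj_iff]
  constructor
  · rintro ⟨c, hc⟩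
    exact ⟨⟨c.1, congrArg Prod.fst hc⟩, ⟨c.2, congrArg Prod.snd hc⟩⟩
  · rintro ⟨⟨c, hc⟩, ⟨d, hd⟩⟩
    exact ⟨(c, d), Prod.ext hc hd⟩

theorem Subgroup.setOf_mem_prod_top_and_isConj {S K : Type*} [Group S] [Group K]
    (M : Subgroup S) (g : S × K) :
    {x : S × K | x ∈ M.prod (⊤ : Subgroup K) ∧ IsConj x g} =
      {a : S | a ∈ M ∧ IsConj a g.1} ×ˢ {b : K | IsConj b g.2} := by
  ext ⟨a, b⟩
  simp only [Set.mem_ofPred_eq, Set.mem_prod, Subgroup.mem_prod, Subgroup.mem_top, and_true,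
    Prod.isConj_iff, and_assoc]

theorem almostConj_prod_general {S : Type*} [Group S] {K : Type*} [Group K]
    (L L' : Subgroup S)
    (hAC : ∀ g : S, Set.ncard {x : S | x ∈ L ∧ IsConj x g} =
      Set.ncard {x : S | x ∈ L' ∧ IsConj x g}) :
    ∀ g : S × K, Set.ncard {x : S × K | x ∈ L.prod (⊤ : Subgroup K) ∧ IsConj x g} =
      Set.ncard {x : S × K | x ∈ L'.prod (⊤ : Subgroup K) ∧ IsConj x g} := by
  intro g
  rw [L.setOf_mem_prod_top_and_isConj, L'.setOf_mem_prod_top_and_isConj, Set.ncard_prod,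
    Set.ncard_prod, hAC g.1]

/-- If `L` and `L'` are almost conjugate subgroups of a finite group `S` and `K` is any
finite group, then `L × K` and `L' × K` are almost conjugate subgroups of `S × K`. -/
theorem almostConj_prod {S : Type*} [Group S] [Finite S] {K : Type*} [Group K] [Finite K]
    (L L' : Subgroup S)
    (hAC : ∀ g : S, Set.ncard {x : S | x ∈ L ∧ IsConj x g} =
      Set.ncard {x : S | x ∈ L' ∧ IsConj x g}) :
    ∀ g : S × K, Set.ncard {x : S × K | x ∈ L.prod (⊤ : Subgroup K) ∧ IsConj x g} =
      Set.ncard {x : S × K | x ∈ L'.prod (⊤ : Subgroup K) ∧ IsConj x g} :=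
  almostConj_prod_general L L' hAC
end

section
/- Let S be a group with subgroups L and L' such that (i) L and L' are elementwise conjugate in S, and (ii) the normal core of L in S and the normal core of L' in S are both trivial. Then for every positive integer k, the subgroups L^(×k) and L'^(×k) of the k-fold direct power S^(×k) (i.e., the functions Fin k → S with all values in L, respectively in L') are elementwise conjugate in S^(×k), and the normal cores of L^(×k) and of L'^(×k) in S^(×k) are both trivial. If moreover S is finite and L and L' are almost conjugate in S, then L^(×k) and L'^(×k) are almost conjugate in S^(×k). -/
/-! All three properties are checked coordinatewise: conjugacy in a direct product is
conjugacy in every coordinate, so the set of elements of `L^k` conjugate to `g` is the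
product of the sets of elements of `L` conjugate to the coordinates `g i`. The normal core of
`L^k` is the product of the normal cores, since one may conjugate each coordinate separately. -/

theorem Pi.isConj_iff {ι : Type*} {G : ι → Type*} [∀ i, Group (G i)] {x y : ∀ i, G i} :
    IsConj x y ↔ ∀ i, IsConj (x i) (y i) := by
  simp only [_root_.isConj_iff]
  constructor
  · rintro ⟨c, hc⟩ i
    exact ⟨c i, congrFun hc i⟩
  · intro h
    choose c hc using h
    exact ⟨c, funext hc⟩

theorem Set.ncard_univ_pi {ι : Type*} [Fintype ι] {α : ι → Type*} (t : ∀ i, Set (α i)) :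
    (Set.pi Set.univ t).ncard = ∏ i, (t i).ncard := by
  simp only [← Nat.card_coe_set_eq]
  rw [Nat.card_congr (Equiv.Set.univPi t), Nat.card_pi]

namespace Subgroup

variable {ι : Type*} {G : ι → Type*} [∀ i, Group (G i)]

theorem exists_isConj_mem_pi_univ {H K : ∀ i, Subgroup (G i)}
    (hHK : ∀ i, ∀ h ∈ H i, ∃ k ∈ K i, IsConj h k) :
    ∀ h ∈ pi Set.univ H, ∃ k ∈ pi Set.univ K, IsConj h k := by
  intro h hh
  choose k hkK hk using fun i => hHK i (h i) (hh i trivial)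
  exact ⟨k, fun i _ => hkK i, Pi.isConj_iff.mpr hk⟩

theorem normalCore_pi_univ (H : ∀ i, Subgroup (G i)) :
    (pi Set.univ H).normalCore = pi Set.univ fun i => (H i).normalCore := by
  classical
  ext x
  constructor
  · intro hx i _ b
    simpa using hx (Pi.mulSingle i b) i trivial
  · intro hx c i _
    exact hx i trivial (c i)

theorem normalCore_pi_univ_eq_bot {H : ∀ i, Subgroup (G i)} (hH : ∀ i, (H i).normalCore = ⊥) :
    (pi Set.univ H).normalCore = ⊥ := by
  rw [normalCore_pi_univ, funext hH, pi_bot]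

theorem setOf_mem_pi_univ_and_isConj (H : ∀ i, Subgroup (G i)) (g : ∀ i, G i) :
    {x | x ∈ pi Set.univ H ∧ IsConj x g} =
      Set.pi Set.univ fun i => {y | y ∈ H i ∧ IsConj y (g i)} := by
  ext x
  simp only [Set.mem_ofPred_eq, mem_pi, Set.mem_pi, Set.mem_univ, true_implies, Pi.isConj_iff]
  exact ⟨fun ⟨hH, hg⟩ i => ⟨hH i, hg i⟩,
    fun h => ⟨fun i => (h i).1, fun i => (h i).2⟩⟩

theorem ncard_setOf_mem_pi_univ_and_isConj_eq [Fintype ι] {H K : ∀ i, Subgroup (G i)}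
    (hHK : ∀ i (g : G i),
      {x | x ∈ H i ∧ IsConj x g}.ncard = {x | x ∈ K i ∧ IsConj x g}.ncard)
    (g : ∀ i, G i) :
    {x | x ∈ pi Set.univ H ∧ IsConj x g}.ncard =
      {x | x ∈ pi Set.univ K ∧ IsConj x g}.ncard := by
  rw [setOf_mem_pi_univ_and_isConj, setOf_mem_pi_univ_and_isConj, Set.ncard_univ_pi,
    Set.ncard_univ_pi]
  exact Finset.prod_congr rfl fun i _ => hHK i (g i)

end Subgroup

theorem pi_elementwiseConj_normalCore_almostConj_general {S : Type*} [Group S]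
    (L L' : Subgroup S)
    (hEC : (∀ h ∈ L, ∃ k ∈ L', IsConj h k) ∧ (∀ k ∈ L', ∃ h ∈ L, IsConj k h))
    (hFF : L.normalCore = ⊥ ∧ L'.normalCore = ⊥)
    (k : ℕ) :
    ((∀ h ∈ Subgroup.pi Set.univ (fun _ : Fin k => L),
        ∃ h' ∈ Subgroup.pi Set.univ (fun _ : Fin k => L'), IsConj h h') ∧
      (∀ h' ∈ Subgroup.pi Set.univ (fun _ : Fin k => L'),
        ∃ h ∈ Subgroup.pi Set.univ (fun _ : Fin k => L), IsConj h' h)) ∧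
    (Subgroup.pi Set.univ (fun _ : Fin k => L)).normalCore = ⊥ ∧
    (Subgroup.pi Set.univ (fun _ : Fin k => L')).normalCore = ⊥ ∧
    (Finite S →
      (∀ g : S, Set.ncard {x : S | x ∈ L ∧ IsConj x g} =
        Set.ncard {x : S | x ∈ L' ∧ IsConj x g}) →
      (∀ g : Fin k → S,
        Set.ncard {x : Fin k → S | x ∈ Subgroup.pi Set.univ (fun _ => L) ∧ IsConj x g} =
        Set.ncard {x : Fin k → S | x ∈ Subgroup.pi Set.univ (fun _ => L') ∧ IsConj x g})) :=
  ⟨⟨Subgroup.exists_isConj_mem_pi_univ fun _ => hEC.1,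
      Subgroup.exists_isConj_mem_pi_univ fun _ => hEC.2⟩,
    Subgroup.normalCore_pi_univ_eq_bot fun _ => hFF.1,
    Subgroup.normalCore_pi_univ_eq_bot fun _ => hFF.2,
    fun _ hAC => Subgroup.ncard_setOf_mem_pi_univ_and_isConj_eq fun _ => hAC⟩

/-- Passing to finite direct powers preserves elementwise conjugacy (EC), the triviality of
normal cores (FF), and — when the ambient group is finite — almost conjugacy (AC). -/
theorem pi_elementwiseConj_normalCore_almostConj {S : Type*} [Group S]
    (L L' : Subgroup S)
    (hEC : (∀ h ∈ L, ∃ k ∈ L', IsConj h k) ∧ (∀ k ∈ L', ∃ h ∈ L, IsConj k h))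
    (hFF : L.normalCore = ⊥ ∧ L'.normalCore = ⊥)
    (k : ℕ) (hk : 0 < k) :
    ((∀ h ∈ Subgroup.pi Set.univ (fun _ : Fin k => L),
        ∃ h' ∈ Subgroup.pi Set.univ (fun _ : Fin k => L'), IsConj h h') ∧
      (∀ h' ∈ Subgroup.pi Set.univ (fun _ : Fin k => L'),
        ∃ h ∈ Subgroup.pi Set.univ (fun _ : Fin k => L), IsConj h' h)) ∧
    (Subgroup.pi Set.univ (fun _ : Fin k => L)).normalCore = ⊥ ∧
    (Subgroup.pi Set.univ (fun _ : Fin k => L')).normalCore = ⊥ ∧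
    (Finite S →
      (∀ g : S, Set.ncard {x : S | x ∈ L ∧ IsConj x g} =
        Set.ncard {x : S | x ∈ L' ∧ IsConj x g}) →
      (∀ g : Fin k → S,
        Set.ncard {x : Fin k → S | x ∈ Subgroup.pi Set.univ (fun _ => L) ∧ IsConj x g} =
        Set.ncard {x : Fin k → S | x ∈ Subgroup.pi Set.univ (fun _ => L') ∧ IsConj x g})) :=
  pi_elementwiseConj_normalCore_almostConj_general L L' hEC hFF k
end

section
/- Let G be a finite group, U a subgroup of G, and g ∈ G. Let Fix(g, G/U) denote the set of left cosets xU ∈ G/U with g·xU = xU. Then |Fix(g, G/U)| · |U| = |{u ∈ U : u is conjugate to g in G}| · |C_G(g)|, where C_G(g) is the centralizer of g in G. -/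
/-!
Both sides count `S = {x ∈ G | x⁻¹ g x ∈ U}`. On the one hand `S` is the union of the cosets
`xU` fixed by `g`. On the other hand `x ↦ x⁻¹ g x` maps `S` onto `U ∩ gᴳ`, and its fibres are
the cosets of `C_G(g)`; this is orbit–stabilizer for the conjugation action, relativised to `U`.
-/

open MulAction QuotientGroup

theorem MulAction.card_setOf_smul_mem {α X : Type*} [Group α] [MulAction α X] (b : X)
    (s : Set X) :
    Nat.card {a : α | a • b ∈ s} =
      Nat.card (s ∩ orbit α b : Set X) * Nat.card (stabilizer α b) := by
  set e := (orbitEquivQuotientStabilizer α b).symm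
  have hpre : {a : α | a • b ∈ s} = (↑) ⁻¹' (e ⁻¹' {o | (o : X) ∈ s}) := by
    ext a
    simp [e, orbitEquivQuotientStabilizer_symm_apply]
  have horbit : e ⁻¹' {o | (o : X) ∈ s} ≃ (s ∩ orbit α b : Set X) :=
    (e.subtypeEquiv fun _ => Iff.rfl).trans <|
      (Equiv.subtypeSubtypeEquivSubtypeInter _ (· ∈ s)).trans <|
        Equiv.subtypeEquivRight fun _ => and_comm
  rw [hpre, card_preimage_mk, Nat.card_congr horbit, mul_comm]

theorem ConjAct.card_stabilizer_eq_card_centralizer {G : Type*} [Group G] (g : G) :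
    Nat.card (stabilizer (ConjAct G) g) = Nat.card (Subgroup.centralizer {g}) := by
  rw [Subgroup.centralizer_eq_comap_stabilizer]
  exact Nat.card_congr (toConjAct.toEquiv.subtypeEquiv fun _ => Iff.rfl).symm

theorem QuotientGroup.preimage_mk_setOf_smul_eq_self {G : Type*} [Group G] (U : Subgroup G)
    (g : G) : (↑) ⁻¹' {q : G ⧸ U | g • q = q} = {x : G | x⁻¹ * g * x ∈ U} := by
  ext x
  rw [Set.mem_ofPred_eq, ← U.inv_mem_iff]
  simp [QuotientGroup.eq, mul_assoc]

theorem card_fixed_cosets_mul_card_eq_general {G : Type*} [Group G]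
    (U : Subgroup G) (g : G) :
    Nat.card {x : G ⧸ U | g • x = x} * Nat.card U =
      Set.ncard {u : G | u ∈ U ∧ IsConj u g} *
        Nat.card (Subgroup.centralizer ({g} : Set G)) := by
  have hconj : {x : G | x⁻¹ * g * x ∈ U} ≃ {c : ConjAct G | c • g ∈ (U : Set G)} :=
    ((Equiv.inv G).trans ConjAct.toConjAct.toEquiv).subtypeEquiv fun x => by
      simp [ConjAct.smul_def]
  have hclass : {u : G | u ∈ U ∧ IsConj u g} = (U : Set G) ∩ orbit (ConjAct G) g := by
    ext u
    simp
  rw [mul_comm, ← card_preimage_mk, preimage_mk_setOf_smul_eq_self, Nat.card_congr hconj,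
    card_setOf_smul_mem, ConjAct.card_stabilizer_eq_card_centralizer, hclass,
    Nat.card_coe_set_eq]

/-- Counting fixed cosets: for a finite group `G`, a subgroup `U` and `g ∈ G`,
`|Fix(g, G/U)| ⬝ |U| = |U ∩ gᴳ| ⬝ |C_G(g)|`. -/
theorem card_fixed_cosets_mul_card_eq {G : Type*} [Group G] [Finite G]
    (U : Subgroup G) (g : G) :
    Nat.card {x : G ⧸ U | g • x = x} * Nat.card U =
      Set.ncard {u : G | u ∈ U ∧ IsConj u g} *
        Nat.card (Subgroup.centralizer ({g} : Set G)) :=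
  card_fixed_cosets_mul_card_eq_general U g
end

section
/- Let K be a field, let V be a finite-dimensional K-vector space, and let f : V → V be a linear automorphism. Then f has an eigenvector (there exist v ∈ V with v ≠ 0 and λ ∈ K with f(v) = λ·v) if and only if f stabilizes some hyperplane of V, i.e., there exists a subspace W of V with dim W + 1 = dim V and f(W) = W. -/
/-!
`f` has an eigenvector with eigenvalue `c` exactly when `f - c` is not surjective, i.e. when the
range of `f - c` lies in some hyperplane `W`. Such a `W` is `f`-stable, since
`f w = (f - c) w + c w`. Conversely, an `f`-stable hyperplane `W` arises this way: `f` acts on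
the line `V ⧸ W` as a scalar `c`, so `f - c` maps `V` into `W`. For an automorphism, `f(W) ⊆ W`
already forces `f(W) = W` by counting dimensions.
-/

open Module

namespace Submodule

theorem map_le_of_range_sub_smul_id_le {R V : Type*} [CommRing R] [AddCommGroup V] [Module R V]
    {f : V →ₗ[R] V} {W : Submodule R V} {c : R}
    (h : LinearMap.range (f - c • LinearMap.id) ≤ W) : W.map f ≤ W := by
  rintro _ ⟨w, hw, rfl⟩
  have hsub : f w - c • w ∈ W := h ⟨w, rfl⟩
  simpa using W.add_mem hsub (W.smul_mem c hw)

variable {K V : Type*} [Field K] [AddCommGroup V] [Module K V]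

theorem exists_range_sub_smul_id_le_of_map_le {f : V →ₗ[K] V} {W : Submodule K V}
    (hW : finrank K (V ⧸ W) = 1) (hf : W.map f ≤ W) :
    ∃ c : K, LinearMap.range (f - c • LinearMap.id) ≤ W := by
  obtain ⟨c, hc, -⟩ :=
    LinearMap.existsUnique_eq_smul_id_of_finrank_eq_one hW (W.mapQ W f (map_le_iff_le_comap.mp hf))
  refine ⟨c, ?_⟩
  rintro _ ⟨x, rfl⟩
  rw [← W.ker_mkQ, LinearMap.mem_ker]
  have hx := LinearMap.congr_fun hc (W.mkQ x)
  simp only [mkQ_apply, mapQ_apply, LinearMap.smul_apply, LinearMap.id_apply] at hx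
  simp [hx]

theorem map_le_iff_exists_range_sub_smul_id_le {f : V →ₗ[K] V} {W : Submodule K V}
    (hW : finrank K (V ⧸ W) = 1) :
    W.map f ≤ W ↔ ∃ c : K, LinearMap.range (f - c • LinearMap.id) ≤ W :=
  ⟨exists_range_sub_smul_id_le_of_map_le hW, fun ⟨_, h⟩ ↦ map_le_of_range_sub_smul_id_le h⟩

variable [FiniteDimensional K V]

theorem finrank_quotient_eq_one_iff {W : Submodule K V} :
    finrank K (V ⧸ W) = 1 ↔ finrank K W + 1 = finrank K V := by
  have := W.finrank_quotient_add_finrank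
  omega

theorem lt_top_iff_exists_le_finrank_add_one_eq {p : Submodule K V} :
    p < ⊤ ↔ ∃ W : Submodule K V, finrank K W + 1 = finrank K V ∧ p ≤ W := by
  constructor
  · intro hp
    obtain ⟨φ, hφ, hpφ⟩ := p.exists_le_ker_of_lt_top hp
    exact ⟨LinearMap.ker φ, Dual.finrank_ker_add_one_of_ne_zero hφ, hpφ⟩
  · rintro ⟨W, hW, hpW⟩
    refine lt_of_le_of_lt hpW (lt_top_iff_ne_top.mpr ?_)
    rintro rfl
    rw [finrank_top] at hW
    omega

theorem map_equiv_eq_iff_map_le (f : V ≃ₗ[K] V) {W : Submodule K V} :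
    W.map (f : V →ₗ[K] V) = W ↔ W.map (f : V →ₗ[K] V) ≤ W :=
  ⟨le_of_eq, fun h ↦ eq_of_le_of_finrank_le h (f.finrank_map_eq W).ge⟩

end Submodule

namespace Module.End

variable {K V : Type*} [Field K] [AddCommGroup V] [Module K V] [FiniteDimensional K V]

theorem exists_eigenvector_iff_range_sub_smul_id_lt_top (f : V →ₗ[K] V) (c : K) :
    (∃ v : V, v ≠ 0 ∧ f v = c • v) ↔ LinearMap.range (f - c • LinearMap.id) < ⊤ := by
  rw [lt_top_iff_ne_top, Ne, LinearMap.range_eq_top, ← LinearMap.injective_iff_surjective,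
    ← LinearMap.ker_eq_bot, Submodule.eq_bot_iff]
  simp [sub_eq_zero, and_comm]

theorem exists_eigenvector_iff_exists_hyperplane_map_le (f : V →ₗ[K] V) :
    (∃ v : V, v ≠ 0 ∧ ∃ c : K, f v = c • v) ↔
      ∃ W : Submodule K V, finrank K W + 1 = finrank K V ∧ W.map f ≤ W := by
  calc (∃ v : V, v ≠ 0 ∧ ∃ c : K, f v = c • v)
      ↔ ∃ c : K, ∃ v : V, v ≠ 0 ∧ f v = c • v :=
        ⟨fun ⟨v, hv, c, hc⟩ ↦ ⟨c, v, hv, hc⟩, fun ⟨c, v, hv, hc⟩ ↦ ⟨v, hv, c, hc⟩⟩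
    _ ↔ ∃ c : K, ∃ W : Submodule K V, finrank K W + 1 = finrank K V ∧
          LinearMap.range (f - c • LinearMap.id) ≤ W := by
        simp_rw [exists_eigenvector_iff_range_sub_smul_id_lt_top,
          Submodule.lt_top_iff_exists_le_finrank_add_one_eq]
    _ ↔ ∃ W : Submodule K V, finrank K W + 1 = finrank K V ∧
          ∃ c : K, LinearMap.range (f - c • LinearMap.id) ≤ W := by
        rw [exists_comm]; simp only [exists_and_left]
    _ ↔ ∃ W : Submodule K V, finrank K W + 1 = finrank K V ∧ W.map f ≤ W :=
        exists_congr fun W ↦ and_congr_right fun hW ↦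
          (Submodule.map_le_iff_exists_range_sub_smul_id_le
            (Submodule.finrank_quotient_eq_one_iff.mpr hW)).symm

end Module.End

/-- A linear automorphism of a finite-dimensional vector space has an eigenvector if and
only if it stabilizes a hyperplane. -/
theorem hasEigenvector_iff_stabilizes_hyperplane {K V : Type*} [Field K]
    [AddCommGroup V] [Module K V] [FiniteDimensional K V] (f : V ≃ₗ[K] V) :
    (∃ v : V, v ≠ 0 ∧ ∃ lam : K, f v = lam • v) ↔
      (∃ W : Submodule K V, Module.finrank K W + 1 = Module.finrank K V ∧
        W.map (f : V →ₗ[K] V) = W) := by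
  simp_rw [Submodule.map_equiv_eq_iff_map_le]
  exact Module.End.exists_eigenvector_iff_exists_hyperplane_map_le (f : V →ₗ[K] V)
end

section
/- Let K be a field and V a finite-dimensional K-vector space with dim V ≥ 1. Fix a one-dimensional subspace x₀ of V and a hyperplane W₀ of V, and set S = GL(V), L = {f ∈ S : f(x₀) = x₀}, L' = {f ∈ S : f(W₀) = W₀}. Form the wreath product G = S ≀ Sym(Fin 2), the semidirect product (Fin 2 → S) ⋊ Sym(Fin 2) where Sym(Fin 2) acts by swapping coordinates. Then the subgroups L ≀ Sym(Fin 2) = {(f, t) ∈ G : f 0 ∈ L and f 1 ∈ L} and L' ≀ Sym(Fin 2) = {(f, t) ∈ G : f 0 ∈ L' and f 1 ∈ L'} are elementwise conjugate in G. -/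
/-- The coordinate-permutation action of `Equiv.Perm α` on `α → S`:
`(σ • f) i = f (σ⁻¹ i)`. -/
def permMulAut (S : Type*) [Group S] (α : Type*) : Equiv.Perm α →* MulAut (α → S) where
  toFun σ :=
    { toFun := fun f => f ∘ σ.symm
      invFun := fun f => f ∘ σ
      left_inv := fun f => by ext i; simp
      right_inv := fun f => by ext i; simp
      map_mul' := fun f g => rfl }
  map_one' := by ext f i; rfl
  map_mul' := fun σ τ => by ext f i; rfl

/-- The wreath product `S ≀ T` for `T` a subgroup of `Equiv.Perm α`, i.e. the semidirect
product `(α → S) ⋊ T` where `T` permutes coordinates. -/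
def Wreath (S : Type*) [Group S] {α : Type*} (T : Subgroup (Equiv.Perm α)) : Type _ :=
  (α → S) ⋊[(permMulAut S α).comp T.subtype] T

instance (S : Type*) [Group S] {α : Type*} (T : Subgroup (Equiv.Perm α)) :
    Group (Wreath S T) :=
  inferInstanceAs (Group ((α → S) ⋊[(permMulAut S α).comp T.subtype] T))

/-- The subgroup `L ≀ T` of `S ≀ T`: pairs `(f, t)` with all values of `f` in `L`. -/
def wreathSub {S : Type*} [Group S] {α : Type*} (L : Subgroup S)
    (T : Subgroup (Equiv.Perm α)) : Subgroup (Wreath S T) where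
  carrier := {g : (α → S) ⋊[(permMulAut S α).comp T.subtype] T | ∀ i, g.left i ∈ L}
  one_mem' := fun i => by
    show (1 : (α → S) ⋊[(permMulAut S α).comp T.subtype] T).left i ∈ L
    simpa using one_mem L
  mul_mem' := by
    intro a b ha hb i
    show (a * b).left i ∈ L
    first
      | (erw [SemidirectProduct.mul_left]; exact mul_mem (ha i) (hb _))
      | exact mul_mem (ha i) (hb _)
      | exact mul_mem (ha i) (hb ((a.right : Equiv.Perm α).symm i))
      | (simp only [SemidirectProduct.mul_left] at *; exact mul_mem (ha i) (hb _))
  inv_mem' := by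
    intro a ha i
    show (a⁻¹).left i ∈ L
    first
      | (erw [SemidirectProduct.inv_left]; exact inv_mem (ha _))
      | exact inv_mem (ha _)
      | (simp only [SemidirectProduct.inv_left] at *; exact inv_mem (ha _))

/-- The stabilizer, in the group of linear automorphisms of `V`, of a subspace `W`. -/
def subspaceStabilizer (K : Type*) {V : Type*} [Field K] [AddCommGroup V] [Module K V]
    (W : Submodule K V) : Subgroup (V ≃ₗ[K] V) where
  carrier := {f : V ≃ₗ[K] V | W.map (f : V →ₗ[K] V) = W}
  one_mem' := by simp [Submodule.map_id]
  mul_mem' := by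
    intro a b ha hb
    show W.map ((a * b : V ≃ₗ[K] V) : V →ₗ[K] V) = W
    have : ((a * b : V ≃ₗ[K] V) : V →ₗ[K] V) =
        ((a : V →ₗ[K] V).comp (b : V →ₗ[K] V)) := rfl
    rw [this, Submodule.map_comp, hb, ha]
  inv_mem' := by
    intro a ha
    show W.map ((a⁻¹ : V ≃ₗ[K] V) : V →ₗ[K] V) = W
    conv_lhs => rw [← ha]
    rw [← Submodule.map_comp]
    have : ((a⁻¹ : V ≃ₗ[K] V) : V →ₗ[K] V).comp (a : V →ₗ[K] V) = LinearMap.id := by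
      ext v
      exact a.symm_apply_apply v
    rw [this, Submodule.map_id]

/-!
An automorphism `g` of `V` has `μ` as an eigenvalue iff `g - μ` is not surjective; an eigenvector
spans a `g`-invariant line, and any hyperplane containing the range of `g - μ` is `g`-invariant.
Conversely a `g`-invariant line is spanned by an eigenvector, and a `g`-invariant hyperplane `W`
contains the range of `g - μ`, where `μ` is the scalar by which `g` acts on `V ⧸ W`. As `GL(V)` acts
transitively on subspaces of a given dimension, every element of `L` is conjugate into `L'` and
vice versa.

In `S ≀ Sym(Fin 2)`, conjugation by the base element `(g, 1)` turns `(f, t)` into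
`(i ↦ g i * f i * (g (t⁻¹ i))⁻¹, t)`. For `t = 1` this conjugates the two coordinates
independently; for `t` the swap, a suitable `g` makes the second coordinate `1` and the first any
conjugate of `f 0 * f 1`. So elementwise conjugacy of `L` and `L'` lifts to the wreath products.
-/

theorem Submodule.isCoatom_of_finrank_add_one {K V : Type*} [Field K] [AddCommGroup V]
    [Module K V] [FiniteDimensional K V] {W : Submodule K V}
    (hW : Module.finrank K W + 1 = Module.finrank K V) : IsCoatom W := by
  refine ⟨fun h => by rw [h, finrank_top] at hW; omega, fun U hU => ?_⟩
  have := Submodule.finrank_lt_finrank_of_lt hU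
  exact Submodule.eq_top_of_finrank_eq (le_antisymm (Submodule.finrank_le U) (by omega))

namespace Module.End

variable {K V : Type*} [Field K] [AddCommGroup V] [Module K V]

theorem hasEigenvalue_iff_range_ne_top [FiniteDimensional K V] {f : End K V} {μ : K} :
    f.HasEigenvalue μ ↔ LinearMap.range (f - μ • 1) ≠ ⊤ := by
  rw [hasEigenvalue_iff, eigenspace_def, ne_eq, ne_eq, ← LinearMap.isUnit_iff_ker_eq_bot,
    LinearMap.isUnit_iff_range_eq_top]

theorem map_le_of_range_sub_smul_le {f : End K V} {μ : K} {H : Submodule K V}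
    (h : LinearMap.range (f - μ • 1) ≤ H) : H.map f ≤ H := by
  rintro _ ⟨v, hv, rfl⟩
  have hfv : f v = (f - μ • 1) v + μ • v := by simp
  rw [hfv]
  exact H.add_mem (h ⟨v, rfl⟩) (H.smul_mem μ hv)

theorem exists_hasEigenvalue_of_map_le_of_finrank_eq_one {f : End K V} {x : Submodule K V}
    (hf : x.map f ≤ x) (hx : Module.finrank K x = 1) : ∃ μ, f.HasEigenvalue μ := by
  obtain ⟨v, hv, hspan⟩ := finrank_eq_one_iff'.mp hx
  obtain ⟨μ, hμ⟩ := hspan ⟨f v, hf ⟨v, v.2, rfl⟩⟩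
  refine ⟨μ, hasEigenvalue_of_hasEigenvector (x := (v : V)) ⟨?_, ?_⟩⟩
  · exact mem_eigenspace_iff.mpr (congrArg Subtype.val hμ.symm)
  · exact fun h => hv (Subtype.ext h)

theorem HasEigenvalue.exists_map_le_of_finrank_eq_one {f : End K V} {μ : K}
    (hμ : f.HasEigenvalue μ) :
    ∃ x : Submodule K V, x.map f ≤ x ∧ Module.finrank K x = 1 := by
  obtain ⟨v, hv, hv0⟩ := hμ.exists_hasEigenvector
  refine ⟨Submodule.span K {v}, ?_, finrank_span_singleton hv0⟩
  rw [Submodule.map_span, Set.image_singleton, Submodule.span_singleton_le_iff_mem,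
    mem_eigenspace_iff.mp hv]
  exact Submodule.smul_mem _ μ (Submodule.mem_span_singleton_self v)

theorem HasEigenvalue.exists_map_le_of_finrank_add_one [FiniteDimensional K V] {f : End K V}
    {μ : K} (hμ : f.HasEigenvalue μ) :
    ∃ H : Submodule K V, H.map f ≤ H ∧ Module.finrank K H + 1 = Module.finrank K V := by
  obtain ⟨φ, hφ, hle⟩ := Submodule.exists_le_ker_of_lt_top _
    (lt_top_iff_ne_top.mpr (hasEigenvalue_iff_range_ne_top.mp hμ))
  exact ⟨LinearMap.ker φ, map_le_of_range_sub_smul_le hle,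
    Module.Dual.finrank_ker_add_one_of_ne_zero hφ⟩

theorem exists_hasEigenvalue_of_map_le_of_finrank_add_one [FiniteDimensional K V]
    {f : End K V} {W : Submodule K V} (hf : W.map f ≤ W)
    (hW : Module.finrank K W + 1 = Module.finrank K V) : ∃ μ, f.HasEigenvalue μ := by
  have hWc := Submodule.isCoatom_of_finrank_add_one hW
  obtain ⟨u, hu⟩ := SetLike.exists_not_mem_of_ne_top W hWc.1
  have hsup := (Submodule.isCompl_span_singleton_of_isCoatom_of_notMem hWc hu).sup_eq_top
  obtain ⟨w, hw, z, hz, hfu⟩ :=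
    Submodule.mem_sup.mp (hsup ▸ Submodule.mem_top : f u ∈ W ⊔ Submodule.span K {u})
  obtain ⟨μ, rfl⟩ := Submodule.mem_span_singleton.mp hz
  refine ⟨μ, hasEigenvalue_iff_range_ne_top.mpr fun htop => hWc.1 (top_le_iff.mp ?_)⟩
  rw [← htop, LinearMap.range_eq_map, ← hsup, Submodule.map_sup, Submodule.map_span]
  refine sup_le ?_ ?_
  · rintro _ ⟨v, hv, rfl⟩
    simpa using W.sub_mem (hf ⟨v, hv, rfl⟩) (W.smul_mem μ hv)
  · rw [Set.image_singleton, Submodule.span_singleton_le_iff_mem]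
    simpa [← hfu] using hw

end Module.End

section GeneralLinear

variable {K V : Type*} [Field K] [AddCommGroup V] [Module K V]

theorem mem_subspaceStabilizer {W : Submodule K V} {g : V ≃ₗ[K] V} :
    g ∈ subspaceStabilizer K W ↔ W.map (g : V →ₗ[K] V) = W := Iff.rfl

variable [FiniteDimensional K V]

theorem Submodule.exists_linearEquiv_map_eq_of_finrank_eq {A B : Submodule K V}
    (h : Module.finrank K A = Module.finrank K B) :
    ∃ c : V ≃ₗ[K] V, A.map (c : V →ₗ[K] V) = B := by
  obtain ⟨A', hA'⟩ := A.exists_isCompl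
  obtain ⟨B', hB'⟩ := B.exists_isCompl
  have h' : Module.finrank K A' = Module.finrank K B' := by
    have := Submodule.finrank_add_eq_of_isCompl hA'
    have := Submodule.finrank_add_eq_of_isCompl hB'
    omega
  obtain ⟨e⟩ := FiniteDimensional.nonempty_linearEquiv_of_finrank_eq h
  obtain ⟨e'⟩ := FiniteDimensional.nonempty_linearEquiv_of_finrank_eq h'
  let c : V ≃ₗ[K] V := (Submodule.prodEquivOfIsCompl A A' hA').symm ≪≫ₗ
    e.prodCongr e' ≪≫ₗ Submodule.prodEquivOfIsCompl B B' hB'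
  refine ⟨c, Submodule.eq_of_le_of_finrank_eq ?_ (by rw [LinearEquiv.finrank_map_eq, h])⟩
  rintro _ ⟨a, ha, rfl⟩
  have ha' : ((A.prodEquivOfIsCompl A' hA').symm a).2 = 0 :=
    (A.prodEquivOfIsCompl_symm_apply_snd_eq_zero A' hA').mpr ha
  simp only [c, LinearEquiv.coe_coe, LinearEquiv.trans_apply, LinearEquiv.prodCongr_apply, ha',
    map_zero, Submodule.coe_prodEquivOfIsCompl', ZeroMemClass.coe_zero, add_zero, SetLike.coe_mem]

theorem exists_isConj_mem_subspaceStabilizer {g : V ≃ₗ[K] V} {A B : Submodule K V}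
    (hA : A.map (g : V →ₗ[K] V) ≤ A) (h : Module.finrank K A = Module.finrank K B) :
    ∃ k ∈ subspaceStabilizer K B, IsConj g k := by
  obtain ⟨c, hc⟩ := Submodule.exists_linearEquiv_map_eq_of_finrank_eq h
  refine ⟨c * g * c⁻¹, ?_, isConj_iff.mpr ⟨c, rfl⟩⟩
  have hc' : B.map ((c⁻¹ : V ≃ₗ[K] V) : V →ₗ[K] V) = A := (Submodule.map_symm_eq_iff c).mpr hc
  rw [mem_subspaceStabilizer]
  refine Submodule.eq_of_le_of_finrank_eq ?_ (LinearEquiv.finrank_map_eq _ _)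
  calc B.map ((c * g * c⁻¹ : V ≃ₗ[K] V) : V →ₗ[K] V)
      = ((B.map ((c⁻¹ : V ≃ₗ[K] V) : V →ₗ[K] V)).map (g : V →ₗ[K] V)).map (c : V →ₗ[K] V) := by
        rw [← Submodule.map_comp, ← Submodule.map_comp]; rfl
    _ ≤ A.map (c : V →ₗ[K] V) := by rw [hc']; exact Submodule.map_mono hA
    _ = B := hc

end GeneralLinear

namespace Wreath

variable {S : Type*} [Group S] {α : Type*} {T : Subgroup (Equiv.Perm α)}

def mk (f : α → S) (t : T) : Wreath S T := SemidirectProduct.mk f t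

theorem mk_mem_wreathSub {L : Subgroup S} {f : α → S} {t : T} :
    mk f t ∈ wreathSub L T ↔ ∀ i, f i ∈ L := Iff.rfl

theorem mk_mul_mk_mul_inv (g f : α → S) (t : T) :
    mk g 1 * mk f t * (mk g 1)⁻¹ =
      mk (fun i => g i * f i * (g ((t : Equiv.Perm α)⁻¹ i))⁻¹) t := by
  apply SemidirectProduct.ext
  · rfl
  · show 1 * t * 1⁻¹ = t
    simp

theorem isConj_mk_of_forall {f f' : α → S} (h : ∀ i, IsConj (f i) (f' i)) :
    IsConj (mk f (1 : T)) (mk f' 1) := by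
  choose c hc using fun i => isConj_iff.mp (h i)
  refine isConj_iff.mpr ⟨mk c 1, ?_⟩
  rw [mk_mul_mk_mul_inv]
  congr
  funext i
  simpa using hc i

theorem isConj_mk_of_swap {T : Subgroup (Equiv.Perm (Fin 2))} {f : Fin 2 → S} {t : T}
    (ht : (t : Equiv.Perm (Fin 2)) = Equiv.swap 0 1) {q : S} (hq : IsConj (f 0 * f 1) q) :
    IsConj (mk f t) (mk ![q, 1] t) := by
  obtain ⟨γ, rfl⟩ := isConj_iff.mp hq
  refine isConj_iff.mpr ⟨mk ![γ, γ * (f 1)⁻¹] 1, ?_⟩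
  rw [mk_mul_mk_mul_inv, ht]
  congr
  funext i
  fin_cases i <;> simp [mul_assoc]

theorem exists_isConj_mem_wreathSub_of_fin_two {L₁ L₂ : Subgroup S}
    {T : Subgroup (Equiv.Perm (Fin 2))} (h : ∀ s ∈ L₁, ∃ s' ∈ L₂, IsConj s s') :
    ∀ x ∈ wreathSub L₁ T, ∃ y ∈ wreathSub L₂ T, IsConj x y := by
  rintro ⟨f, t⟩ hf
  change mk f t ∈ _ at hf
  rw [mk_mem_wreathSub] at hf
  rcases (by decide : ∀ σ : Equiv.Perm (Fin 2), σ = 1 ∨ σ = Equiv.swap 0 1) t with ht | ht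
  · choose f' hf' hconj using fun i => h (f i) (hf i)
    obtain rfl : t = 1 := Subtype.ext ht
    exact ⟨mk f' 1, mk_mem_wreathSub.mpr hf', isConj_mk_of_forall hconj⟩
  · obtain ⟨q, hq, hconj⟩ := h _ (mul_mem (hf 0) (hf 1))
    refine ⟨mk ![q, 1] t, mk_mem_wreathSub.mpr ?_, isConj_mk_of_swap ht hconj⟩
    intro i
    fin_cases i
    exacts [hq, one_mem L₂]

end Wreath

theorem wreath_two_elementwiseConj_general {K V : Type*} [Field K]
    [AddCommGroup V] [Module K V] [FiniteDimensional K V]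
    (x₀ : Submodule K V) (hx₀ : Module.finrank K x₀ = 1)
    (W₀ : Submodule K V) (hW₀ : Module.finrank K W₀ + 1 = Module.finrank K V) :
    (∀ h ∈ wreathSub (subspaceStabilizer K x₀) (⊤ : Subgroup (Equiv.Perm (Fin 2))),
      ∃ h' ∈ wreathSub (subspaceStabilizer K W₀) (⊤ : Subgroup (Equiv.Perm (Fin 2))),
        IsConj h h') ∧
    (∀ h' ∈ wreathSub (subspaceStabilizer K W₀) (⊤ : Subgroup (Equiv.Perm (Fin 2))),
      ∃ h ∈ wreathSub (subspaceStabilizer K x₀) (⊤ : Subgroup (Equiv.Perm (Fin 2))),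
        IsConj h' h) := by
  constructor
  · refine Wreath.exists_isConj_mem_wreathSub_of_fin_two fun g hg => ?_
    obtain ⟨μ, hμ⟩ := Module.End.exists_hasEigenvalue_of_map_le_of_finrank_eq_one
      (mem_subspaceStabilizer.mp hg).le hx₀
    obtain ⟨H, hH, hHW₀⟩ := hμ.exists_map_le_of_finrank_add_one
    exact exists_isConj_mem_subspaceStabilizer hH (by omega)
  · refine Wreath.exists_isConj_mem_wreathSub_of_fin_two fun g hg => ?_
    obtain ⟨μ, hμ⟩ := Module.End.exists_hasEigenvalue_of_map_le_of_finrank_add_one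
      (mem_subspaceStabilizer.mp hg).le hW₀
    obtain ⟨x, hx, hxx₀⟩ := hμ.exists_map_le_of_finrank_eq_one
    exact exists_isConj_mem_subspaceStabilizer hx (hxx₀.trans hx₀.symm)

/-- In the wreath product `GL(V) ≀ Sym(Fin 2)`, the subgroups `L ≀ Sym(Fin 2)` and
`L' ≀ Sym(Fin 2)` — where `L` is the stabilizer of a line `x₀` and `L'` the stabilizer of a
hyperplane `W₀` — are elementwise conjugate. -/
theorem wreath_two_elementwiseConj {K V : Type*} [Field K]
    [AddCommGroup V] [Module K V] [FiniteDimensional K V]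
    (hV : 1 ≤ Module.finrank K V)
    (x₀ : Submodule K V) (hx₀ : Module.finrank K x₀ = 1)
    (W₀ : Submodule K V) (hW₀ : Module.finrank K W₀ + 1 = Module.finrank K V) :
    (∀ h ∈ wreathSub (subspaceStabilizer K x₀) (⊤ : Subgroup (Equiv.Perm (Fin 2))),
      ∃ h' ∈ wreathSub (subspaceStabilizer K W₀) (⊤ : Subgroup (Equiv.Perm (Fin 2))),
        IsConj h h') ∧
    (∀ h' ∈ wreathSub (subspaceStabilizer K W₀) (⊤ : Subgroup (Equiv.Perm (Fin 2))),
      ∃ h ∈ wreathSub (subspaceStabilizer K x₀) (⊤ : Subgroup (Equiv.Perm (Fin 2))),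
        IsConj h' h) :=
  wreath_two_elementwiseConj_general x₀ hx₀ W₀ hW₀
end

section
/- Let S be a group and let L and L' be subgroups of S such that every element of L' is conjugate in S to some element of L. Then for every positive integer n, every permutation γ of Fin n, and every function a : Fin n → S with a i ∈ L' for all i, there exists a function l : Fin n → S such that for every i, the element (l i) · (a i) · (l (γ⁻¹ i))⁻¹ lies in L. -/
/-!
On each cycle of `σ` fix a base point `r` and let `q x` be the product of `b` along the path
from `r` to `x`, so that `q (σ x) = b x * q x` except where `σ x = r`, where the path closes up
to a loop product, which lies in `L'`. Conjugating that loop into `L` by some `c`, the tuple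
`x ↦ c * (q x)⁻¹` makes every step with `σ x ≠ r` equal to `1` and the closing step equal to
the conjugated loop.
-/

namespace Equiv.Perm

variable {α S : Type*} [Group S] (σ : Perm α)

noncomputable def cycleBase (x : α) : α :=
  (Quotient.mk (SameCycle.setoid σ) x).out

theorem sameCycle_cycleBase (x : α) : SameCycle σ (σ.cycleBase x) x :=
  Quotient.mk_out (s := SameCycle.setoid σ) x

theorem cycleBase_apply (x : α) : σ.cycleBase (σ x) = σ.cycleBase x :=
  congrArg Quotient.out (Quotient.sound (sameCycle_apply_left.2 (SameCycle.refl σ x)))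

def pathProd (b : α → S) (x : α) : ℕ → S
  | 0 => 1
  | m + 1 => b ((σ ^ m) x) * pathProd b x m

theorem pathProd_mem {K : Subgroup S} {b : α → S} (hb : ∀ x, b x ∈ K) (x : α) :
    ∀ m, σ.pathProd b x m ∈ K
  | 0 => one_mem K
  | m + 1 => mul_mem (hb _) (pathProd_mem hb x m)

variable [Finite α]

open Classical

noncomputable def cycleIndex (x : α) : ℕ :=
  Nat.find (σ.sameCycle_cycleBase x).exists_nat_pow_eq

theorem pow_cycleIndex_cycleBase (x : α) : (σ ^ σ.cycleIndex x) (σ.cycleBase x) = x :=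
  Nat.find_spec (σ.sameCycle_cycleBase x).exists_nat_pow_eq

theorem cycleBase_eq_of_cycleIndex_eq_zero {x : α} (h : σ.cycleIndex x = 0) :
    σ.cycleBase x = x := by
  simpa [h] using σ.pow_cycleIndex_cycleBase x

theorem cycleIndex_apply_of_ne_zero {x : α} (h : σ.cycleIndex (σ x) ≠ 0) :
    σ.cycleIndex (σ x) = σ.cycleIndex x + 1 := by
  obtain ⟨m, hm⟩ := Nat.exists_eq_add_one_of_ne_zero h
  have hpow : (σ ^ (m + 1)) (σ.cycleBase x) = σ x := by
    rw [← hm, ← σ.cycleBase_apply x, pow_cycleIndex_cycleBase]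
  have hm_spec : (σ ^ m) (σ.cycleBase x) = x := by
    rwa [pow_succ', mul_apply, σ.injective.eq_iff] at hpow
  have hle : σ.cycleIndex x ≤ m := Nat.find_min' _ hm_spec
  have hge : m + 1 ≤ σ.cycleIndex x + 1 := by
    rw [← hm, cycleIndex, Nat.find_le_iff]
    refine ⟨σ.cycleIndex x + 1, le_rfl, ?_⟩
    rw [σ.cycleBase_apply, pow_succ', mul_apply, pow_cycleIndex_cycleBase]
  omega

noncomputable def cycleProd (b : α → S) (x : α) : S :=
  σ.pathProd b (σ.cycleBase x) (σ.cycleIndex x)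

theorem cycleProd_mem {K : Subgroup S} {b : α → S} (hb : ∀ x, b x ∈ K) (x : α) :
    σ.cycleProd b x ∈ K :=
  σ.pathProd_mem hb _ _

theorem cycleProd_apply_of_ne_zero (b : α → S) {x : α} (h : σ.cycleIndex (σ x) ≠ 0) :
    σ.cycleProd b (σ x) = b x * σ.cycleProd b x := by
  rw [cycleProd, cycleIndex_apply_of_ne_zero σ h, cycleBase_apply, pathProd,
    pow_cycleIndex_cycleBase, cycleProd]

theorem exists_apply_mul_mul_inv_mem_of_forall_isConj {L L' : Subgroup S}
    (h : ∀ a ∈ L', ∃ b ∈ L, IsConj b a) {b : α → S} (hb : ∀ x, b x ∈ L') :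
    ∃ l : α → S, ∀ x, l (σ x) * b x * (l x)⁻¹ ∈ L := by
  have hloop : ∀ x, ∃ c : S, c * (b x * σ.cycleProd b x) * c⁻¹ ∈ L := fun x => by
    obtain ⟨y, hyL, hyx⟩ := h _ (mul_mem (hb x) (σ.cycleProd_mem hb x))
    obtain ⟨c, hc⟩ := isConj_iff.1 hyx.symm
    exact ⟨c, hc ▸ hyL⟩
  choose c hc using hloop
  refine ⟨fun x => c (σ⁻¹ (σ.cycleBase x)) * (σ.cycleProd b x)⁻¹, fun x => ?_⟩
  by_cases h0 : σ.cycleIndex (σ x) = 0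
  · have hbase : σ.cycleBase x = σ x :=
      σ.cycleBase_apply x ▸ σ.cycleBase_eq_of_cycleIndex_eq_zero h0
    have hprod : σ.cycleProd b (σ x) = 1 := by rw [cycleProd, h0, pathProd]
    simp only [cycleBase_apply, hbase, hprod, coe_inv, symm_apply_apply]
    convert hc x using 1
    group
  · simp only [σ.cycleProd_apply_of_ne_zero b h0, cycleBase_apply]
    convert one_mem L using 1
    group

end Equiv.Perm

theorem exists_tuple_conj_solution_general {S : Type*} [Group S] (L L' : Subgroup S)
    (h : ∀ a ∈ L', ∃ b ∈ L, IsConj b a)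
    (n : ℕ) (γ : Equiv.Perm (Fin n))
    (a : Fin n → S) (ha : ∀ i, a i ∈ L') :
    ∃ l : Fin n → S, ∀ i, l i * a i * (l (γ⁻¹ i))⁻¹ ∈ L := by
  obtain ⟨l, hl⟩ := γ.exists_apply_mul_mul_inv_mem_of_forall_isConj h
    (b := a ∘ γ) (fun _ => ha _)
  exact ⟨l, fun i => by simpa using hl (γ⁻¹ i)⟩

/-- Equation-solving lemma: if every element of `L'` is conjugate in `S` to some element of
`L`, then for every permutation `γ` of `Fin n` and every tuple `a` with values in `L'`,
there is a tuple `l` with `l i * a i * (l (γ⁻¹ i))⁻¹ ∈ L` for all `i`. -/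
theorem exists_tuple_conj_solution {S : Type*} [Group S] (L L' : Subgroup S)
    (h : ∀ a ∈ L', ∃ b ∈ L, IsConj b a)
    (n : ℕ) (hn : 0 < n) (γ : Equiv.Perm (Fin n))
    (a : Fin n → S) (ha : ∀ i, a i ∈ L') :
    ∃ l : Fin n → S, ∀ i, l i * a i * (l (γ⁻¹ i))⁻¹ ∈ L :=
  exists_tuple_conj_solution_general L L' h n γ a ha
end

section
/- For every natural number N, there exist a finite group G and subgroups U and V of G such that: U and V are elementwise conjugate in G; U and V are not conjugate in G; U and V are maximal subgroups of G; the normal core of U in G and the normal core of V in G are both trivial; and the indices satisfy [G : U] = [G : V] > N. -/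
/-!
`SL n 𝔽₂` acts 2-transitively, hence primitively, on the projective space `ℙ(𝔽₂ⁿ)`, so the
stabilizer `U` of a point is maximal of index `|ℙ(𝔽₂ⁿ)| ≥ n`; its normal core is the kernel of
the action, i.e. the centre, which is trivial over `𝔽₂`. The inverse-transpose automorphism `θ`
pulls `U` back to `V = θ⁻¹(U)` (the stabilizer of a hyperplane), which inherits maximality, trivial
core and index. An element is conjugate into a point stabilizer iff it fixes some point, i.e. has
an eigenvalue, and `g`, `θ g` have eigenvalues simultaneously; hence `U` and `V` are elementwise
conjugate. For `n ≥ 3` they are not conjugate, because `V` fixes no point: a suitable transvection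
in `V` moves it.
-/

open Matrix MulAction Projectivization
open scoped LinearAlgebra.Projectivization

def Subgroup.IsElementwiseConj {G : Type*} [Group G] (H K : Subgroup G) : Prop :=
  (∀ h ∈ H, ∃ k ∈ K, IsConj h k) ∧ (∀ k ∈ K, ∃ h ∈ H, IsConj k h)

theorem Subgroup.normalCore_comap_mulEquiv {G G' : Type*} [Group G] [Group G'] (e : G ≃* G')
    (H : Subgroup G') : (H.comap e.toMonoidHom).normalCore = H.normalCore.comap e.toMonoidHom := by
  ext g
  show (∀ c : G, c * g * c⁻¹ ∈ H.comap e.toMonoidHom) ↔ ∀ c' : G', c' * e g * c'⁻¹ ∈ H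
  refine ⟨fun h c' => ?_, fun h c => by simpa using h (e c)⟩
  obtain ⟨c, rfl⟩ := e.surjective c'
  simpa using h c

namespace MulAction

variable {G X : Type*} [Group G] [MulAction G X] [IsPretransitive G X]

theorem exists_isConj_mem_stabilizer_iff (x : X) (g : G) :
    (∃ k ∈ stabilizer G x, IsConj g k) ↔ ∃ y : X, g • y = y := by
  constructor
  · rintro ⟨k, hk, hgk⟩
    obtain ⟨c, rfl⟩ := isConj_iff.mp hgk
    rw [mem_stabilizer_iff, mul_smul, mul_smul] at hk
    exact ⟨c⁻¹ • x, eq_inv_smul_iff.mpr hk⟩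
  · rintro ⟨y, hy⟩
    obtain ⟨c, rfl⟩ := exists_smul_eq G y x
    refine ⟨c * g * c⁻¹, ?_, isConj_iff.mpr ⟨c, rfl⟩⟩
    rw [mem_stabilizer_iff, mul_smul, mul_smul, inv_smul_smul, hy]

theorem normalCore_stabilizer (x : X) :
    (stabilizer G x).normalCore = (toPermHom G X).ker := by
  ext g
  rw [MonoidHom.mem_ker, Equiv.Perm.ext_iff]
  show (∀ c : G, c * g * c⁻¹ ∈ stabilizer G x) ↔ ∀ y, g • y = y
  have conj_mem_iff (c : G) : c * g * c⁻¹ ∈ stabilizer G x ↔ g • c⁻¹ • x = c⁻¹ • x := by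
    rw [mem_stabilizer_iff, mul_smul, mul_smul, ← eq_inv_smul_iff]
  simp only [conj_mem_iff]
  refine ⟨fun h y => ?_, fun h c => h _⟩
  obtain ⟨c, rfl⟩ := exists_smul_eq G x y
  simpa using h c⁻¹

theorem isElementwiseConj_stabilizer_comap (θ : G ≃* G)
    (hθ : ∀ g : G, (∃ y : X, θ g • y = y) ↔ ∃ y : X, g • y = y) (x : X) :
    (stabilizer G x).IsElementwiseConj ((stabilizer G x).comap θ.toMonoidHom) := by
  constructor
  · intro h hh
    obtain ⟨k, hk, hconj⟩ :=
      (exists_isConj_mem_stabilizer_iff x (θ h)).mpr ((hθ h).mpr ⟨x, hh⟩)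
    refine ⟨θ.symm k, by simpa using hk, ?_⟩
    simpa using θ.symm.toMonoidHom.map_isConj hconj
  · intro k hk
    exact (exists_isConj_mem_stabilizer_iff x k).mpr ((hθ k).mp ⟨x, hk⟩)

end MulAction

namespace Projectivization

variable (K : Type*) {ι : Type*} [Field K] [DecidableEq ι]

def basisPoint (i : ι) : ℙ K (ι → K) :=
  mk K (Pi.single i (1 : K)) (by simp)

theorem basisPoint_injective : Function.Injective (basisPoint K (ι := ι)) := by
  intro i j hij
  obtain ⟨a, ha⟩ := (mk_eq_mk_iff' K _ _ _ _).mp hij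
  by_contra hne
  simpa [Pi.single_apply, hne] using congrFun ha i

end Projectivization

namespace Matrix.SpecialLinearGroup

variable {ι R : Type*} [Fintype ι] [DecidableEq ι] [CommRing R]

@[simp] theorem transpose_transpose (g : SpecialLinearGroup ι R) : g.transpose.transpose = g := rfl

theorem inv_transpose (g : SpecialLinearGroup ι R) : g.transpose⁻¹ = g⁻¹.transpose :=
  Subtype.ext <| by simp [adjugate_transpose]

theorem transpose_mul (g h : SpecialLinearGroup ι R) :
    (g * h).transpose = h.transpose * g.transpose :=
  Subtype.ext <| by simp

def transposeInv : SpecialLinearGroup ι R ≃* SpecialLinearGroup ι R where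
  toFun g := g⁻¹.transpose
  invFun g := g⁻¹.transpose
  left_inv g := by simp [← inv_transpose]
  right_inv g := by simp [← inv_transpose]
  map_mul' g h := by simp [transpose_mul]

theorem transposeInv_apply (g : SpecialLinearGroup ι R) : transposeInv g = g⁻¹.transpose := rfl

theorem transposeInv_transvection {i j : ι} (hij : i ≠ j) (b : R) :
    transposeInv (transvection hij b) = transvection hij.symm (-b) :=
  Subtype.ext <| by simp [transposeInv_apply, transvection_inv, transvection_coe]

theorem transvection_smul {i j : ι} (hij : i ≠ j) (b : R) (v : ι → R) :
    transvection hij b • v = v + Pi.single i (b * v j) := by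
  rw [SpecialLinearGroup.smul_def, transvection_coe, smul_eq_mulVec, add_mulVec, one_mulVec,
    single_mulVec]
  rfl

theorem center_eq_bot_of_subsingleton_units [Subsingleton Rˣ] :
    Subgroup.center (SpecialLinearGroup ι R) = ⊥ := by
  cases isEmpty_or_nonempty ι with
  | inl _ => exact Subgroup.eq_bot_of_subsingleton _
  | inr h =>
    obtain ⟨i⟩ := h
    have := (center_equiv_rootsOfUnity' (R := R) i).toEquiv.subsingleton
    exact Subgroup.eq_bot_of_subsingleton _

variable {K : Type*} [Field K]

theorem exists_smul_eq_self_iff_det_sub_smul_one (g : SpecialLinearGroup ι K) :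
    (∃ p : ℙ K (ι → K), g • p = p) ↔ ∃ a : K, (g.1 - a • 1).det = 0 := by
  simp only [← exists_mulVec_eq_zero_iff, sub_mulVec, smul_mulVec, one_mulVec, sub_eq_zero]
  constructor
  · rintro ⟨p, hp⟩
    induction p using Projectivization.ind with | h v hv =>
    obtain ⟨a, ha⟩ := (mk_eq_mk_iff' K _ _ _ hv).mp ((smul_mk g hv).symm.trans hp)
    exact ⟨a, v, hv, ha.symm⟩
  · rintro ⟨a, v, hv, hgv⟩
    exact ⟨mk K v hv, (smul_mk g hv).trans ((mk_eq_mk_iff' K _ _ _ hv).mpr ⟨a, hgv.symm⟩)⟩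

theorem exists_transpose_smul_eq_self_iff (g : SpecialLinearGroup ι K) :
    (∃ p : ℙ K (ι → K), g.transpose • p = p) ↔ ∃ p : ℙ K (ι → K), g • p = p := by
  simp only [exists_smul_eq_self_iff_det_sub_smul_one, coe_transpose,
    ← det_transpose (g.1 - _), transpose_sub, transpose_smul, transpose_one]

theorem exists_transposeInv_smul_eq_self_iff (g : SpecialLinearGroup ι K) :
    (∃ p : ℙ K (ι → K), transposeInv g • p = p) ↔ ∃ p : ℙ K (ι → K), g • p = p := by
  rw [transposeInv_apply, exists_transpose_smul_eq_self_iff]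
  exact exists_congr fun p => inv_smul_eq_iff.trans eq_comm

theorem normalCore_stabilizer_eq_center (p : ℙ K (ι → K)) :
    (stabilizer (SpecialLinearGroup ι K) p).normalCore = Subgroup.center _ := by
  rw [normalCore_stabilizer, SL_mulAction_ker]

theorem stabilizer_comap_transposeInv_ne_stabilizer (h3 : 3 ≤ Fintype.card ι) (i₀ : ι)
    (y : ℙ K (ι → K)) :
    (stabilizer _ (basisPoint K i₀)).comap
      (transposeInv : SpecialLinearGroup ι K ≃* _).toMonoidHom ≠ stabilizer _ y := by
  intro h
  induction y using Projectivization.ind with | h w hw =>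
  obtain ⟨j, hj⟩ : ∃ j, w j ≠ 0 := Function.ne_iff.mp hw
  obtain ⟨i, hi₀, hij⟩ := ENat.exists_ne_ne_of_three_le (by simpa using h3) i₀ j
  -- `transposeInv` maps this transvection to one fixing `e i₀`, so by `h` it fixes `[w]`.
  have hfix : transvection hij (1 : K) • mk K w hw = mk K w hw := by
    rw [← mem_stabilizer_iff, ← h, Subgroup.mem_comap, mem_stabilizer_iff]
    simp [basisPoint, transposeInv_transvection, smul_mk, transvection_smul, hi₀]
  obtain ⟨a, ha⟩ := (mk_eq_mk_iff' K _ _ _ hw).mp ((smul_mk _ hw).symm.trans hfix)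
  have hj' := congrFun ha j
  have hi' := congrFun ha i
  simp only [Pi.smul_apply, smul_eq_mul, transvection_smul, one_mul, Pi.add_apply,
    Pi.single_eq_of_ne hij.symm, add_zero, Pi.single_eq_same] at hj' hi'
  have ha1 : a = 1 := mul_right_cancel₀ hj (hj'.trans (one_mul _).symm)
  rw [ha1, one_mul] at hi'
  exact hj (by linear_combination -hi')

end Matrix.SpecialLinearGroup

open Matrix.SpecialLinearGroup in
/-- Unbounded index: for every `N` there is a finite group `G` with subgroups `U`, `V`
that are elementwise conjugate but not conjugate, both maximal, both with trivial normal
core, and with equal index `[G : U] = [G : V] > N`. -/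
theorem exists_EC_triple_MAX_FF_unbounded_index (N : ℕ) :
    ∃ (G : Type) (_ : Group G) (_ : Finite G) (U V : Subgroup G),
      ((∀ h ∈ U, ∃ k ∈ V, IsConj h k) ∧ (∀ k ∈ V, ∃ h ∈ U, IsConj k h)) ∧
      (¬ ∃ g : G, Subgroup.map (MulAut.conj g).toMonoidHom U = V) ∧
      IsCoatom U ∧ IsCoatom V ∧
      U.normalCore = ⊥ ∧ V.normalCore = ⊥ ∧
      U.index = V.index ∧ N < U.index := by
  let G := SpecialLinearGroup (Fin (N + 3)) (ZMod 2)
  let U := stabilizer G (basisPoint (ZMod 2) (0 : Fin (N + 3)))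
  have : Nontrivial (ℙ (ZMod 2) (Fin (N + 3) → ZMod 2)) :=
    (basisPoint_injective (ZMod 2)).nontrivial
  have hU : IsCoatom U := IsPreprimitive.isCoatom_stabilizer_of_isPreprimitive G _
  have hcoreU : U.normalCore = ⊥ := by
    rw [normalCore_stabilizer_eq_center, center_eq_bot_of_subsingleton_units]
  refine ⟨G, inferInstance, inferInstance, U, U.comap transposeInv.toMonoidHom,
    isElementwiseConj_stabilizer_comap _ exists_transposeInv_smul_eq_self_iff _, ?_, hU,
    (Subgroup.isCoatom_comap transposeInv).mpr hU, hcoreU, ?_,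
    (U.index_comap_of_surjective transposeInv.surjective).symm, ?_⟩
  · rintro ⟨g, hg⟩
    rw [← stabilizer_smul_eq_stabilizer_map_conj] at hg
    exact stabilizer_comap_transposeInv_ne_stabilizer (by simp) 0 _ hg.symm
  · rw [Subgroup.normalCore_comap_mulEquiv, hcoreU, MonoidHom.comap_bot, MonoidHom.ker_eq_bot_iff]
    exact transposeInv.injective
  · have hcard := Nat.card_le_card_of_injective _ (basisPoint_injective (ZMod 2) (ι := Fin (N + 3)))
    rw [Nat.card_fin] at hcard
    rw [index_stabilizer_of_transitive]
    omega
end
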